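/- Let f, g : [a,b] → ℝ^N be differentiable at t with f(t) ≠ g(t), let {x_i} be a dense sequence in ℝ^N, and let κ : ℝ^N → ℓ^∞ be the associated Kuratowski embedding. If the composed curves κ∘f and κ∘g have a w*-derivative of their difference at t given coordinatewise by ((d/ds|_{s=t}|f(s)-x_i|) − (d/ds|_{s=t}|g(s)-x_i|))_{i}, then ‖(κ∘f − κ∘g)'(t)‖_∞ ≥ max{|f'(t)|, |g'(t)|} ≥ (|f'(t)| + |g'(t)|)/2. -/

import Mathlib

/-!
Off the two points `f t`, `g t`, the `i`-th coordinate of `D` is `Φ (xi i)`, where `Φ p` is the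
difference of the derivatives at `t` of `‖f s - p‖` and `‖g s - p‖`. Since `Φ` is continuous
there, density of `xi` gives `|Φ p| ≤ ‖D‖` for every such `p`. Letting `p → f t` along the line
through `f t` in direction `f'`, the first derivative is constantly `±‖f'‖` while the second tends
to a finite limit `c`; approaching from the side where the sign is opposite to that of `c` gives
`‖f'‖ ≤ ‖D‖`, and symmetrically `‖g'‖ ≤ ‖D‖`.
-/

open scoped ENNReal RealInnerProductSpace Topology
open Filter

variable {E : Type*} [NormedAddCommGroup E] [InnerProductSpace ℝ E]

theorem HasDerivAt.norm {h : ℝ → E} {h' : E} {t : ℝ} (hh : HasDerivAt h h' t) (h0 : h t ≠ 0) :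
    HasDerivAt (fun s => ‖h s‖) (⟪h t, h'⟫ / ‖h t‖) t := by
  have hne : ‖h t‖ ^ 2 ≠ 0 := pow_ne_zero _ (norm_ne_zero_iff.2 h0)
  have hsq : HasDerivAt (fun s => ‖h s‖ ^ 2) (2 * ⟪h t, h'⟫) t := by
    simpa [real_inner_comm, two_mul, mul_comm] using hh.norm_sq
  have hsqrt := (Real.hasDerivAt_sqrt hne).comp t hsq
  simp only [Function.comp_def, Real.sqrt_sq (norm_nonneg _)] at hsqrt
  exact hsqrt.congr_deriv (by field_simp)

/-- The rate of change of `‖γ - p‖` along a curve `γ` passing through `x` with velocity `v`. -/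
noncomputable def radialDeriv (x v p : E) : ℝ := ⟪x - p, v⟫ / ‖x - p‖

theorem deriv_norm_sub_eq_radialDeriv {f : ℝ → E} {f' : E} {t : ℝ} {p : E}
    (hf : HasDerivAt f f' t) (hp : p ≠ f t) :
    deriv (fun s => ‖f s - p‖) t = radialDeriv (f t) f' p :=
  ((hf.sub_const p).norm (sub_ne_zero.2 hp.symm)).deriv

theorem continuousAt_radialDeriv {x p : E} (v : E) (hp : p ≠ x) :
    ContinuousAt (radialDeriv x v) p := by
  have hsub : Continuous fun q : E => x - q := continuous_const.sub continuous_id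
  exact (hsub.inner continuous_const).continuousAt.div hsub.norm.continuousAt
    (norm_ne_zero_iff.2 (sub_ne_zero.2 hp.symm))

theorem radialDeriv_sub_smul {x u : E} (v : E) (hu : ‖u‖ = 1) {δ : ℝ} (hδ : 0 < δ) :
    radialDeriv x v (x - δ • u) = ⟪u, v⟫ := by
  rw [radialDeriv, sub_sub_cancel, norm_smul, hu, real_inner_smul_left,
    Real.norm_of_nonneg hδ.le, mul_one, mul_div_cancel_left₀ _ hδ.ne']

theorem exists_norm_eq_one_norm_le_abs_inner_sub [Nontrivial E] (v : E) (c : ℝ) :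
    ∃ u : E, ‖u‖ = 1 ∧ ‖v‖ ≤ |⟪u, v⟫ - c| := by
  rcases eq_or_ne v 0 with rfl | hv
  · obtain ⟨u, hu⟩ := exists_norm_eq E zero_le_one
    exact ⟨u, hu, by simp⟩
  have hu : ‖‖v‖⁻¹ • v‖ = 1 := by
    rw [norm_smul, norm_inv, norm_norm, inv_mul_cancel₀ (norm_ne_zero_iff.2 hv)]
  have hinner : ⟪‖v‖⁻¹ • v, v⟫ = ‖v‖ := by
    rw [real_inner_smul_left, real_inner_self_eq_norm_sq]; field_simp
  rcases le_total 0 c with hc | hc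
  · refine ⟨-(‖v‖⁻¹ • v), by rwa [norm_neg], ?_⟩
    rw [inner_neg_left, hinner, abs_of_nonpos (by linarith [norm_nonneg v])]
    linarith
  · refine ⟨‖v‖⁻¹ • v, hu, ?_⟩
    rw [hinner, abs_of_nonneg (by linarith [norm_nonneg v])]
    linarith

theorem abs_inner_sub_radialDeriv_le {x y v w : E} {C : ℝ} (hxy : x ≠ y)
    (hC : ∀ p, p ≠ x → p ≠ y → |radialDeriv x v p - radialDeriv y w p| ≤ C)
    {u : E} (hu : ‖u‖ = 1) : |⟪u, v⟫ - radialDeriv y w x| ≤ C := by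
  have hray : Continuous fun δ : ℝ => x - δ • u :=
    continuous_const.sub (continuous_id.smul continuous_const)
  have hray0 : Tendsto (fun δ : ℝ => x - δ • u) (𝓝[>] 0) (𝓝 x) := by
    simpa using (hray.tendsto 0).mono_left nhdsWithin_le_nhds
  have hlim : Tendsto (fun δ : ℝ => radialDeriv x v (x - δ • u) - radialDeriv y w (x - δ • u))
      (𝓝[>] 0) (𝓝 (⟪u, v⟫ - radialDeriv y w x)) := by
    refine (tendsto_const_nhds.congr' ?_).sub
      ((continuousAt_radialDeriv w hxy).tendsto.comp hray0)
    filter_upwards [self_mem_nhdsWithin] with δ hδ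
    exact (radialDeriv_sub_smul v hu hδ).symm
  refine le_of_tendsto hlim.abs ?_
  filter_upwards [self_mem_nhdsWithin, hray0.eventually_ne hxy] with δ hδ hy
  refine hC _ ?_ hy
  simp [(show (0:ℝ) < δ from hδ).ne', ← norm_ne_zero_iff, hu]

theorem norm_le_of_abs_radialDeriv_sub_le {x y v w : E} {C : ℝ} (hxy : x ≠ y)
    (hC : ∀ p, p ≠ x → p ≠ y → |radialDeriv x v p - radialDeriv y w p| ≤ C) : ‖v‖ ≤ C := by
  have : Nontrivial E := ⟨⟨x, y, hxy⟩⟩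
  obtain ⟨u, hu, hv⟩ := exists_norm_eq_one_norm_le_abs_inner_sub v (radialDeriv y w x)
  exact hv.trans (abs_inner_sub_radialDeriv_le hxy hC hu)

theorem le_of_denseRange {X ι α : Type*} [TopologicalSpace X] [TopologicalSpace α] [Preorder α]
    [ClosedIicTopology α] {ξ : ι → X} (hξ : DenseRange ξ) {Φ : X → α} {p : X}
    (hΦ : ContinuousAt Φ p) {S : Set X} (hS : S ∈ 𝓝 p) {C : α} (hC : ∀ i, ξ i ∈ S → Φ (ξ i) ≤ C) :
    Φ p ≤ C := by
  have := hξ.nhdsWithin_neBot p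
  refine le_of_tendsto (hΦ.tendsto.mono_left (nhdsWithin_le_nhds (s := Set.range ξ))) ?_
  filter_upwards [self_mem_nhdsWithin, mem_nhdsWithin_of_mem_nhds hS] with q ⟨i, hi⟩ hq
  exact hi ▸ hC i (hi ▸ hq)

theorem abs_radialDeriv_sub_le_norm {f g : ℝ → E} {f' g' : E} {t : ℝ}
    (hf : HasDerivAt f f' t) (hg : HasDerivAt g g' t) {ξ : ℕ → E} (hξ : DenseRange ξ)
    (D : lp (fun _ : ℕ => ℝ) ∞)
    (hD : ∀ i, D i = deriv (fun s => ‖f s - ξ i‖) t - deriv (fun s => ‖g s - ξ i‖) t)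
    {p : E} (hpf : p ≠ f t) (hpg : p ≠ g t) :
    |radialDeriv (f t) f' p - radialDeriv (g t) g' p| ≤ ‖D‖ := by
  have hΦ : ContinuousAt (fun q => |radialDeriv (f t) f' q - radialDeriv (g t) g' q|) p :=
    ((continuousAt_radialDeriv f' hpf).sub (continuousAt_radialDeriv g' hpg)).abs
  have hS : {f t, g t}ᶜ ∈ 𝓝 p :=
    (Set.toFinite _).isClosed.isOpen_compl.mem_nhds (by simp [hpf, hpg])
  refine le_of_denseRange hξ hΦ hS fun i hi => ?_
  simp only [Set.mem_compl_iff, Set.mem_insert_iff, Set.mem_singleton_iff, not_or] at hi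
  rw [← deriv_norm_sub_eq_radialDeriv hf hi.1, ← deriv_norm_sub_eq_radialDeriv hg hi.2, ← hD i,
    ← Real.norm_eq_abs]
  exact lp.norm_apply_le_norm ENNReal.top_ne_zero D i

theorem stmt_6_general {N : ℕ} {t : ℝ}
    (f g : ℝ → EuclideanSpace ℝ (Fin N)) (f' g' : EuclideanSpace ℝ (Fin N))
    (hf : HasDerivAt f f' t) (hg : HasDerivAt g g' t) (hfg : f t ≠ g t)
    (xi : ℕ → EuclideanSpace ℝ (Fin N)) (hxi : DenseRange xi)
    (D : lp (fun _ : ℕ => ℝ) ∞)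
    (hD : ∀ i : ℕ, D i =
      deriv (fun s => ‖f s - xi i‖) t - deriv (fun s => ‖g s - xi i‖) t) :
    ‖D‖ ≥ max ‖f'‖ ‖g'‖ ∧ max ‖f'‖ ‖g'‖ ≥ (‖f'‖ + ‖g'‖) / 2 := by
  have hΦ := fun p => abs_radialDeriv_sub_le_norm (p := p) hf hg hxi D hD
  refine ⟨max_le (norm_le_of_abs_radialDeriv_sub_le hfg hΦ) ?_, ?_⟩
  · exact norm_le_of_abs_radialDeriv_sub_le hfg.symm fun p hpg hpf =>
      (abs_sub_comm _ _).trans_le (hΦ p hpf hpg)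
  · linarith [le_max_left ‖f'‖ ‖g'‖, le_max_right ‖f'‖ ‖g'‖]

/-- Lemma 6 of the paper: if the difference of the Kuratowski embeddings of
two curves has a w*-derivative at `t` given coordinatewise by the derivatives
of the distance functions, then its `ℓ^∞` norm is at least
`max {‖f'(t)‖, ‖g'(t)‖} ≥ (‖f'(t)‖ + ‖g'(t)‖)/2`. -/
theorem stmt_6 {N : ℕ} {a b t : ℝ} (ht : t ∈ Set.Icc a b)
    (f g : ℝ → EuclideanSpace ℝ (Fin N)) (f' g' : EuclideanSpace ℝ (Fin N))
    (hf : HasDerivAt f f' t) (hg : HasDerivAt g g' t) (hfg : f t ≠ g t)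
    (xi : ℕ → EuclideanSpace ℝ (Fin N)) (hxi : DenseRange xi)
    (x0 : EuclideanSpace ℝ (Fin N))
    (D : lp (fun _ : ℕ => ℝ) ∞)
    (hD : ∀ i : ℕ, D i =
      deriv (fun s => ‖f s - xi i‖) t - deriv (fun s => ‖g s - xi i‖) t) :
    ‖D‖ ≥ max ‖f'‖ ‖g'‖ ∧ max ‖f'‖ ‖g'‖ ≥ (‖f'‖ + ‖g'‖) / 2 :=
  stmt_6_general f g f' g' hf hg hfg xi hxi D hD
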